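/- Let α₁, ..., α_r ∈ (0,1] be algebraically independent over ℚ, and let h > 0 with exp(2π/h) rational; let P_h be the primes not dividing numerator or denominator of exp(2π/h). Then for integers (k_p)_{p∈P_h} and (l_{mj})_{m∈ℕ₀, 1≤j≤r}, all but finitely many zero and not all zero, exp(-ih(Σ_p k_p log p + Σ_{j=1}^r Σ_m l_{mj} log(m+α_j))) ≠ 1. -/

import Mathlib

/-! If the exponential is `1`, then `h X ∈ 2πℤ`, i.e. `X = n log q`, and exponentiating gives
`∏ p ^ k p * ∏ (m + α j) ^ l j m = q ^ n`. So the product over the `α`-terms is rational;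
splitting its exponents by sign turns this into a polynomial identity `A(α) = c B(α)`, hence
`A = c B` by algebraic independence, and evaluating at a point where exactly one linear factor
`X j + m` vanishes forces every `l j m` to be `0`. What is left, `∏ p ^ k p = q ^ n` with every
`p` coprime to `q`, contradicts unique factorisation: compare `p`-adic valuations. -/

open Function MvPolynomial

lemma exists_int_eq_mul_of_cexp_neg_I_mul_eq_one {h X : ℝ} (hh : h ≠ 0)
    (H : Complex.exp (-Complex.I * h * X) = 1) : ∃ n : ℤ, X = n * (2 * Real.pi / h) := by
  obtain ⟨n, hn⟩ := Complex.exp_eq_one_iff.mp H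
  have hhX : ((h * X : ℝ) : ℂ) = ((-n * (2 * Real.pi) : ℝ) : ℂ) := by
    push_cast
    linear_combination Complex.I * hn + ((h : ℂ) * X + 2 * Real.pi * n) * Complex.I_sq
  refine ⟨-n, ?_⟩
  rw [Complex.ofReal_inj] at hhX
  field_simp
  push_cast
  linarith

lemma Real.exp_intCast_mul_log {x : ℝ} (hx : 0 < x) (n : ℤ) :
    Real.exp (n * Real.log x) = x ^ n := by
  rw [mul_comm, ← Real.rpow_def_of_pos hx, Real.rpow_intCast]

lemma Real.exp_finsum_intCast_mul_log {ι : Type*} {k : ι → ℤ} (hk : (support k).Finite)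
    {x : ι → ℝ} (hx : ∀ i, k i ≠ 0 → 0 < x i) :
    Real.exp (∑ᶠ i, (k i : ℝ) * Real.log (x i)) = ∏ᶠ i, x i ^ k i := by
  rw [finsum_eq_sum_of_support_subset (s := hk.toFinset), Real.exp_sum,
    finprod_eq_prod_of_mulSupport_subset (s := hk.toFinset)]
  · exact Finset.prod_congr rfl fun i hi =>
      Real.exp_intCast_mul_log (hx i (hk.mem_toFinset.mp hi)) (k i)
  all_goals
    rw [Set.Finite.coe_toFinset]
    exact fun i hi h0 => hi (by simp [h0])

lemma Set.Finite.hasFiniteMulSupport_zpow {ι G : Type*} [DivisionMonoid G]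
    {k : ι → ℤ} (hk : (support k).Finite) (x : ι → G) :
    HasFiniteMulSupport fun i => x i ^ k i :=
  hk.subset fun i hi h0 => hi (by simp [h0])

lemma Rat.cast_finprod_zpow {ι K : Type*} [Field K] [CharZero K] {k : ι → ℤ}
    (hk : (support k).Finite) (x : ι → ℚ) :
    ((∏ᶠ i, x i ^ k i : ℚ) : K) = ∏ᶠ i, (x i : K) ^ k i :=
  (map_finprod (Rat.castHom K) (hk.hasFiniteMulSupport_zpow x)).trans (by simp)

lemma Rat.padicValuation_natCast_of_prime_of_ne {p₀ p : ℕ} [Fact p₀.Prime] (hp : p.Prime)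
    (hne : p ≠ p₀) : Rat.padicValuation p₀ p = 1 := by
  have hndvd : ¬ (p₀ : ℤ) ∣ p := by
    exact_mod_cast fun hd => hne ((Nat.prime_dvd_prime_iff_eq Fact.out hp).mp hd).symm
  rw [← Int.cast_natCast, Rat.padicValuation_cast, Int.padicValuation_eq_one_iff.mpr hndvd]

lemma Rat.padicValuation_eq_one_of_not_dvd_num_mul_den {p : ℕ} [Fact p.Prime] {q : ℚ}
    (h : ¬ (p : ℤ) ∣ q.num * q.den) : Rat.padicValuation p q = 1 := by
  conv_lhs => rw [← Rat.num_div_den q]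
  rw [map_div₀, ← Int.cast_natCast q.den, Rat.padicValuation_cast, Rat.padicValuation_cast,
    Int.padicValuation_eq_one_iff.mpr fun hd => h (hd.mul_right _),
    Int.padicValuation_eq_one_iff.mpr fun hd => h (hd.mul_left _), div_one]

lemma Rat.padicValuation_finprod_natCast_zpow {k : ℕ → ℤ} (hk : (support k).Finite)
    (hprime : ∀ p, k p ≠ 0 → p.Prime) (p₀ : ℕ) [Fact p₀.Prime] :
    Rat.padicValuation p₀ (∏ᶠ p : ℕ, (p : ℚ) ^ k p) = WithZero.exp (-k p₀) := by
  rw [map_finprod _ (hk.hasFiniteMulSupport_zpow _), finprod_eq_single _ p₀]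
  · simp
  · intro p hp
    by_cases hk0 : k p = 0
    · simp [hk0]
    · rw [map_zpow₀, padicValuation_natCast_of_prime_of_ne (hprime p hk0) hp, one_zpow]

lemma eq_zero_of_finprod_natCast_zpow_eq_zpow {k : ℕ → ℤ} (hk : (support k).Finite)
    (hprime : ∀ p, k p ≠ 0 → p.Prime) {q : ℚ} {n : ℤ} (h : ∏ᶠ p : ℕ, (p : ℚ) ^ k p = q ^ n)
    {p₀ : ℕ} (hp₀ : p₀.Prime) (hq : ¬ (p₀ : ℤ) ∣ q.num * q.den) : k p₀ = 0 := by
  have := Fact.mk hp₀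
  have hval := congrArg (Rat.padicValuation p₀) h
  rw [Rat.padicValuation_finprod_natCast_zpow hk hprime, map_zpow₀,
    Rat.padicValuation_eq_one_of_not_dvd_num_mul_den hq, one_zpow] at hval
  simpa using hval

section ShiftedProducts

variable {ι : Type*}

lemma aeval_prod_prod_natCast_add_X_pow [Fintype ι] {R A : Type*} [CommSemiring R]
    [CommSemiring A] [Algebra R A] (x : ι → A) (T : ι → Finset ℕ) (e : ι → ℕ → ℕ) :
    aeval x (∏ j, ∏ m ∈ T j, ((m : MvPolynomial ι R) + X j) ^ e j m) =
      ∏ j, ∏ m ∈ T j, ((m : A) + x j) ^ e j m := by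
  simp [map_prod]

variable {F : Type*} [Field F] [CharZero F] [DecidableEq ι]

lemma natCast_add_update_one_eq_zero_iff (j₀ j : ι) (m₀ m : ℕ) :
    (m : F) + update (fun _ => (1 : F)) j₀ (-(m₀ : F)) j = 0 ↔ j = j₀ ∧ m = m₀ := by
  rcases eq_or_ne j j₀ with rfl | hj
  · simp [add_neg_eq_zero]
  · simpa [hj] using Nat.cast_add_one_ne_zero m

lemma prod_prod_natCast_add_update_one_pow_eq_zero_iff [Fintype ι] (T : ι → Finset ℕ)
    (e : ι → ℕ → ℕ) (j₀ : ι) (m₀ : ℕ) :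
    ∏ j, ∏ m ∈ T j, ((m : F) + update (fun _ => (1 : F)) j₀ (-(m₀ : F)) j) ^ e j m = 0 ↔
      m₀ ∈ T j₀ ∧ e j₀ m₀ ≠ 0 := by
  simp [Finset.prod_eq_zero_iff, pow_eq_zero_iff', natCast_add_update_one_eq_zero_iff]

end ShiftedProducts

lemma zpow_mul_pow_toNat_neg {G₀ : Type*} [GroupWithZero G₀] {a : G₀} (ha : a ≠ 0) (n : ℤ) :
    a ^ n * a ^ (-n).toNat = a ^ n.toNat := by
  rw [← zpow_natCast, ← zpow_natCast, ← zpow_add₀ ha]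
  congr 1
  omega

theorem AlgebraicIndependent.eq_zero_of_prod_finprod_zpow_eq_algebraMap {ι F K : Type*}
    [Fintype ι] [Field F] [CharZero F] [Field K] [Algebra F K] {α : ι → K}
    (hα : AlgebraicIndependent F α) {l : ι → ℕ → ℤ} (hl : ∀ j, (support (l j)).Finite) {c : F}
    (h : ∏ j, ∏ᶠ m : ℕ, ((m : K) + α j) ^ l j m = algebraMap F K c) : l = 0 := by
  classical
  set T : ι → Finset ℕ := fun j => (hl j).toFinset
  have hT : ∀ j, ∏ᶠ m : ℕ, ((m : K) + α j) ^ l j m = ∏ m ∈ T j, ((m : K) + α j) ^ l j m :=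
    fun j => finprod_eq_prod_of_mulSupport_subset _ fun m hm =>
      (hl j).mem_toFinset.mpr fun h0 => hm (by simp [h0])
  simp only [hT] at h
  have hne : ∀ j (m : ℕ), (m : K) + α j ≠ 0 := fun j m h0 =>
    hα.transcendental j (eq_neg_of_add_eq_zero_right h0 ▸ (isAlgebraic_natCast m).neg)
  have hc : c ≠ 0 := by
    rintro rfl
    obtain ⟨j, -, hj⟩ := Finset.prod_eq_zero_iff.mp (h.trans (map_zero _))
    exact Finset.prod_ne_zero_iff.mpr (fun m _ => zpow_ne_zero _ (hne j m)) hj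
  let P (e : ι → ℕ → ℕ) : MvPolynomial ι F :=
    ∏ j, ∏ m ∈ T j, ((m : MvPolynomial ι F) + X j) ^ e j m
  set lpos : ι → ℕ → ℕ := fun j m => (l j m).toNat
  set lneg : ι → ℕ → ℕ := fun j m => (-l j m).toNat
  have hpoly : P lpos = C c * P lneg := hα <| by
    simp only [P, map_mul, aeval_C, aeval_prod_prod_natCast_add_X_pow, ← h,
      ← Finset.prod_mul_distrib, zpow_mul_pow_toNat_neg (hne _ _), lpos, lneg]
  ext j₀ m₀
  by_contra hl0
  have hm₀ : m₀ ∈ T j₀ := (hl j₀).mem_toFinset.mpr hl0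
  -- Only `X j₀ + m₀` vanishes here; it divides one side only, by the sign of `l j₀ m₀`.
  have hval := congrArg (aeval (update (fun _ => (1 : F)) j₀ (-(m₀ : F)))) hpoly
  simp only [P, map_mul, aeval_C, aeval_prod_prod_natCast_add_X_pow, Algebra.algebraMap_self,
    RingHom.id_apply] at hval
  have key : (m₀ ∈ T j₀ ∧ lpos j₀ m₀ ≠ 0) ↔ (m₀ ∈ T j₀ ∧ lneg j₀ m₀ ≠ 0) := by
    rw [← prod_prod_natCast_add_update_one_pow_eq_zero_iff (F := F),
      ← prod_prod_natCast_add_update_one_pow_eq_zero_iff (F := F), hval, mul_eq_zero,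
      or_iff_right hc]
  simp only [hm₀, true_and, lpos, lneg, Pi.zero_apply] at key hl0
  omega

theorem stmt_11 (r : ℕ) (α : Fin r → ℝ) (hmem : ∀ j, 0 < α j ∧ α j ≤ 1)
    (hind : AlgebraicIndependent ℚ α)
    (h : ℝ) (hh : 0 < h) (q : ℚ) (hq : Real.exp (2 * Real.pi / h) = (q : ℝ))
    (k : ℕ → ℤ) (l : Fin r → ℕ → ℤ)
    (hkfin : (Function.support k).Finite)
    (hlfin : ∀ j, (Function.support (l j)).Finite)
    (hksupp : ∀ p, k p ≠ 0 → Nat.Prime p ∧ ¬ (p : ℤ) ∣ q.num * (q.den : ℤ))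
    (hnontriv : (∃ p, k p ≠ 0) ∨ (∃ j m, l j m ≠ 0)) :
    Complex.exp (-Complex.I * h *
      ((∑ᶠ p : ℕ, (k p : ℝ) * Real.log p)
        + ∑ j : Fin r, ∑ᶠ m : ℕ, (l j m : ℝ) * Real.log ((m : ℝ) + α j))) ≠ 1 := by
  intro hexp
  rw [← Complex.ofReal_add] at hexp
  obtain ⟨n, hn⟩ := exists_int_eq_mul_of_cexp_neg_I_mul_eq_one hh.ne' hexp
  have hq0 : (0 : ℝ) < q := hq ▸ Real.exp_pos _
  have hprime : ∀ p, k p ≠ 0 → p.Prime := fun p hp => (hksupp p hp).1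
  set P : ℚ := ∏ᶠ p : ℕ, (p : ℚ) ^ k p
  have hmul : (P : ℝ) * ∏ j, ∏ᶠ m : ℕ, ((m : ℝ) + α j) ^ l j m = (q : ℝ) ^ n := by
    have hexpX := congrArg Real.exp hn
    rw [← Real.log_exp (2 * Real.pi / h), hq, Real.exp_intCast_mul_log hq0] at hexpX
    rw [← hexpX, Real.exp_add, Real.exp_sum, Real.exp_finsum_intCast_mul_log hkfin
      fun p hp => Nat.cast_pos.mpr (hprime p hp).pos]
    have hpos : ∀ j (m : ℕ), (0 : ℝ) < m + α j := fun j m =>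
      add_pos_of_nonneg_of_pos m.cast_nonneg (hmem j).1
    simp only [fun j => Real.exp_finsum_intCast_mul_log (hlfin j) fun m _ => hpos j m,
      P, Rat.cast_finprod_zpow hkfin, Rat.cast_natCast]
  have hP0 : (P : ℝ) ≠ 0 := left_ne_zero_of_mul (hmul ▸ (zpow_pos hq0 n).ne')
  have hl : l = 0 := hind.eq_zero_of_prod_finprod_zpow_eq_algebraMap hlfin (c := q ^ n / P) <| by
    rw [eq_ratCast, Rat.cast_div, Rat.cast_zpow, ← hmul, mul_div_cancel_left₀ _ hP0]
  obtain ⟨p₀, hp₀⟩ := hnontriv.resolve_right (by simp [hl])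
  have hP : P = q ^ n := by
    exact_mod_cast (by simpa [hl] using hmul : (P : ℝ) = (q : ℝ) ^ n)
  exact hp₀ (eq_zero_of_finprod_natCast_zpow_eq_zpow hkfin hprime hP (hprime p₀ hp₀)
    (hksupp p₀ hp₀).2)
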